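/- If a graph G is the clique sum of two graphs G1 and G2, then gd(G) = max{gd(G1), gd(G2)}. -/

import Mathlib

/-
A positive semidefinite matrix of rank at most `k` is exactly a Gram matrix of vectors in `ℝᵏ`.
Given rank-`≤ k` completions of `X` for `G1` and `G2`, realize them by vector families `f` and
`g` in `ℝᵏ`. On the clique `V1 ∩ V2` both agree with `X` entrywise, so `f` and `g` have the same
Gram matrix there, and an orthogonal map `O` of `ℝᵏ` carries `g` to `f` on the clique. The family
equal to `f` on `V1` and to `O ∘ g` on `V2` is well defined, and its Gram matrix is a completion of
`X` of rank at most `k` for `G1 ⊔ G2`. The reverse inequality is monotonicity of `gd`.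
-/

open Matrix Finset

/-- The Gram dimension of a graph `G`: the smallest integer `k ≥ 1` such that every
positive semidefinite matrix indexed by the vertices admits a positive semidefinite
matrix of rank at most `k` agreeing with it on the diagonal and on the edges of `G`. -/
noncomputable def gd {V : Type} [Fintype V] (G : SimpleGraph V) : ℕ :=
  sInf {k : ℕ | 1 ≤ k ∧ ∀ X : Matrix V V ℝ, X.PosSemidef →
    ∃ Y : Matrix V V ℝ, Y.PosSemidef ∧ Y.rank ≤ k ∧
      (∀ i, Y i i = X i i) ∧ (∀ i j, G.Adj i j → Y i j = X i j)}

open Module Submodule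
open scoped RealInnerProductSpace

section GramIsometry

variable {ι E F : Type*} [Fintype ι]
  [NormedAddCommGroup E] [InnerProductSpace ℝ E] [NormedAddCommGroup F] [InnerProductSpace ℝ F]

theorem Matrix.inner_linearCombination_eq_of_gram_eq {f : ι → F} {g : ι → E}
    (h : gram ℝ g = gram ℝ f) (c c' : ι → ℝ) :
    ⟪Fintype.linearCombination ℝ g c, Fintype.linearCombination ℝ g c'⟫ =
      ⟪Fintype.linearCombination ℝ f c, Fintype.linearCombination ℝ f c'⟫ := by
  simp only [Fintype.linearCombination_apply, ← star_dotProduct_gram_mulVec, h]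

theorem Matrix.exists_linearIsometry_range_of_gram_eq {f : ι → F} {g : ι → E}
    (h : gram ℝ g = gram ℝ f) :
    ∃ T : LinearMap.range (Fintype.linearCombination ℝ g) →ₗᵢ[ℝ] F,
      ∀ c, T ⟨_, LinearMap.mem_range_self _ c⟩ = Fintype.linearCombination ℝ f c := by
  set φ := Fintype.linearCombination ℝ g
  set ψ := Fintype.linearCombination ℝ f
  have hinner := inner_linearCombination_eq_of_gram_eq h
  have hker : LinearMap.ker φ ≤ LinearMap.ker ψ := fun c hc => by
    rw [LinearMap.mem_ker] at hc ⊢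
    rw [← inner_self_eq_zero (𝕜 := ℝ), ← hinner, hc, inner_zero_left]
  let T : LinearMap.range φ →ₗ[ℝ] F :=
    (LinearMap.ker φ).liftQ ψ hker ∘ₗ φ.quotKerEquivRange.symm.toLinearMap
  have hT : ∀ c, T ⟨φ c, LinearMap.mem_range_self φ c⟩ = ψ c := fun c => by
    simp [T, LinearMap.quotKerEquivRange_symm_apply_image]
  refine ⟨T.isometryOfInner ?_, hT⟩
  rintro ⟨_, c, rfl⟩ ⟨_, c', rfl⟩
  rw [hT, hT]
  exact (hinner c c').symm

theorem Matrix.exists_linearIsometry_comp_eq_of_gram_eq [FiniteDimensional ℝ E] {f g : ι → E}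
    (h : gram ℝ g = gram ℝ f) : ∃ O : E →ₗᵢ[ℝ] E, ∀ i, O (g i) = f i := by
  classical
  obtain ⟨T, hT⟩ := exists_linearIsometry_range_of_gram_eq h
  refine ⟨T.extend, fun i => ?_⟩
  simpa using (T.extend_apply ⟨_, LinearMap.mem_range_self _ (Pi.single i 1)⟩).trans (hT _)

end GramIsometry

section Euclidean

variable {ι E : Type*} [NormedAddCommGroup E] [InnerProductSpace ℝ E]

theorem exists_linearIsometry_euclideanSpace_of_finrank_le [FiniteDimensional ℝ E] {k : ℕ}
    (h : finrank ℝ E ≤ k) : Nonempty (E →ₗᵢ[ℝ] EuclideanSpace ℝ (Fin k)) := by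
  let b := (stdOrthonormalBasis ℝ E).toBasis
  let e := EuclideanSpace.basisFun (Fin k) ℝ ∘ Fin.castLE h
  have hb : b.constr ℝ e ∘ b = e := funext (b.constr_basis ℝ e)
  have hbo : Orthonormal ℝ b := by
    simp only [b, OrthonormalBasis.coe_toBasis]; exact (stdOrthonormalBasis ℝ E).orthonormal
  refine ⟨(b.constr ℝ e).isometryOfOrthonormal hbo ?_⟩
  rw [hb]
  exact (EuclideanSpace.basisFun _ ℝ).orthonormal.comp _ (Fin.castLE_injective h)

theorem Matrix.gram_comp_linearIsometry {F : Type*} [NormedAddCommGroup F] [InnerProductSpace ℝ F]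
    (T : E →ₗᵢ[ℝ] F) (v : ι → E) : gram ℝ (T ∘ v) = gram ℝ v :=
  Matrix.ext fun i j => T.inner_map_map (v i) (v j)

theorem Matrix.exists_gram_eq_euclideanSpace [Finite ι] (v : ι → E) {k : ℕ}
    (h : finrank ℝ (span ℝ (Set.range v)) ≤ k) :
    ∃ w : ι → EuclideanSpace ℝ (Fin k), gram ℝ w = gram ℝ v := by
  have : FiniteDimensional ℝ (span ℝ (Set.range v)) :=
    FiniteDimensional.span_of_finite ℝ (Set.finite_range v)
  obtain ⟨T⟩ := exists_linearIsometry_euclideanSpace_of_finrank_le h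
  exact ⟨T ∘ fun i => ⟨v i, subset_span (Set.mem_range_self i)⟩,
    gram_comp_linearIsometry T _⟩

theorem Matrix.rank_gram_le_finrank [Fintype ι] [FiniteDimensional ℝ E] (v : ι → E) :
    (gram ℝ v).rank ≤ finrank ℝ E := by
  rw [gram_eq_conjTranspose_mul (stdOrthonormalBasis ℝ E), rank_conjTranspose_mul_self]
  exact (rank_le_card_height _).trans (by simp)

open scoped MatrixOrder in
theorem Matrix.PosSemidef.exists_gram_eq [Fintype ι] {X : Matrix ι ι ℝ} (hX : X.PosSemidef)
    {k : ℕ} (hk : X.rank ≤ k) : ∃ v : ι → EuclideanSpace ℝ (Fin k), gram ℝ v = X := by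
  classical
  set B := CFC.sqrt X
  have hBB : Bᴴ * B = X := by
    rw [(CFC.sqrt_nonneg X).posSemidef.1]; exact CFC.sqrt_mul_sqrt_self X hX.nonneg
  let c : ι → EuclideanSpace ℝ ι := fun j => WithLp.toLp 2 (B.col j)
  have hc : gram ℝ c = X := by
    rw [← hBB]; ext i j
    simp [c, mul_apply, PiLp.inner_apply, mul_comm]
  have hspan : finrank ℝ (span ℝ (Set.range c)) = B.rank := by
    have : span ℝ (Set.range c) = (span ℝ (Set.range B.col)).map
        ((WithLp.linearEquiv 2 ℝ (ι → ℝ)).symm : (ι → ℝ) →ₗ[ℝ] EuclideanSpace ℝ ι) := by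
      rw [Submodule.map_span, ← Set.range_comp]; rfl
    rw [this, LinearEquiv.finrank_map_eq, rank_eq_finrank_span_cols]
  have hB : B.rank = X.rank := by rw [← hBB, rank_conjTranspose_mul_self]
  rw [← hc]
  exact exists_gram_eq_euclideanSpace c (by omega)

end Euclidean

section Gluing

variable {ι E : Type*} [Fintype ι] [NormedAddCommGroup E] [InnerProductSpace ℝ E]
  [FiniteDimensional ℝ E]

theorem exists_glued_family_of_inner_eq_on_inter {f g : ι → E} {s t : Set ι}
    (hst : ∀ p ∈ s ∩ t, ∀ q ∈ s ∩ t, ⟪g p, g q⟫ = ⟪f p, f q⟫) :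
    ∃ h : ι → E, (∀ p ∈ s, ∀ q ∈ s, ⟪h p, h q⟫ = ⟪f p, f q⟫) ∧
      (∀ p ∈ t, ∀ q ∈ t, ⟪h p, h q⟫ = ⟪g p, g q⟫) := by
  classical
  obtain ⟨O, hO⟩ := exists_linearIsometry_comp_eq_of_gram_eq (ι := ↥(s ∩ t))
    (f := fun p => f p) (g := fun p => g p) (Matrix.ext fun p q => hst p p.2 q q.2)
  let h : ι → E := fun p => if p ∈ s then f p else O (g p)
  have hs : ∀ p ∈ s, h p = f p := fun p hp => if_pos hp
  have ht : ∀ p ∈ t, h p = O (g p) := fun p hp => by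
    by_cases hps : p ∈ s
    · rw [hs p hps, hO ⟨p, hps, hp⟩]
    · exact if_neg hps
  exact ⟨h, fun p hp q hq => by rw [hs p hp, hs q hq],
    fun p hp q hq => by rw [ht p hp, ht q hq, O.inner_map_map]⟩

end Gluing

namespace SimpleGraph

section RankCompletable

variable {V : Type*} [Fintype V]

def RankCompletable (G : SimpleGraph V) (k : ℕ) : Prop :=
  ∀ X : Matrix V V ℝ, X.PosSemidef →
    ∃ Y : Matrix V V ℝ, Y.PosSemidef ∧ Y.rank ≤ k ∧
      (∀ i, Y i i = X i i) ∧ (∀ i j, G.Adj i j → Y i j = X i j)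

theorem rankCompletable_card (G : SimpleGraph V) : G.RankCompletable (Fintype.card V) :=
  fun X hX => ⟨X, hX, X.rank_le_card_width, fun _ => rfl, fun _ _ _ => rfl⟩

theorem RankCompletable.mono {G : SimpleGraph V} {k l : ℕ} (h : G.RankCompletable k)
    (hkl : k ≤ l) : G.RankCompletable l := fun X hX =>
  let ⟨Y, hY, hrk, hdiag, hadj⟩ := h X hX
  ⟨Y, hY, hrk.trans hkl, hdiag, hadj⟩

theorem RankCompletable.anti {G H : SimpleGraph V} {k : ℕ} (h : H.RankCompletable k)
    (hGH : G ≤ H) : G.RankCompletable k := fun X hX =>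
  let ⟨Y, hY, hrk, hdiag, hadj⟩ := h X hX
  ⟨Y, hY, hrk, hdiag, fun i j hij => hadj i j (hGH hij)⟩

theorem RankCompletable.sup_of_isClique_inter {G1 G2 : SimpleGraph V} {V1 V2 : Set V} {k : ℕ}
    (h1 : G1.RankCompletable k) (h2 : G2.RankCompletable k)
    (hcover : V1 ∪ V2 = Set.univ)
    (hE1 : ∀ i j, G1.Adj i j → i ∈ V1 ∧ j ∈ V1)
    (hE2 : ∀ i j, G2.Adj i j → i ∈ V2 ∧ j ∈ V2)
    (hclique1 : G1.IsClique (V1 ∩ V2)) (hclique2 : G2.IsClique (V1 ∩ V2)) :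
    (G1 ⊔ G2).RankCompletable k := by
  classical
  intro X hX
  obtain ⟨Y1, hY1, hrk1, hdiag1, hadj1⟩ := h1 X hX
  obtain ⟨Y2, hY2, hrk2, hdiag2, hadj2⟩ := h2 X hX
  obtain ⟨f, rfl⟩ := hY1.exists_gram_eq hrk1
  obtain ⟨g, rfl⟩ := hY2.exists_gram_eq hrk2
  have hagree : ∀ p ∈ V1 ∩ V2, ∀ q ∈ V1 ∩ V2, ⟪g p, g q⟫ = ⟪f p, f q⟫ := by
    intro p hp q hq
    rcases eq_or_ne p q with rfl | hpq
    · exact (hdiag2 p).trans (hdiag1 p).symm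
    · exact (hadj2 p q (hclique2 hp hq hpq)).trans (hadj1 p q (hclique1 hp hq hpq)).symm
  obtain ⟨h, hf, hg⟩ := exists_glued_family_of_inner_eq_on_inter hagree
  refine ⟨gram ℝ h, posSemidef_gram ℝ h, (rank_gram_le_finrank h).trans finrank_euclideanSpace_fin.le,
    fun i => ?_, fun i j hij => ?_⟩
  · rcases (hcover ▸ Set.mem_univ i : i ∈ V1 ∪ V2) with hi | hi
    · exact (hf i hi i hi).trans (hdiag1 i)
    · exact (hg i hi i hi).trans (hdiag2 i)
  · rcases hij with hij | hij
    · exact (hf i (hE1 i j hij).1 j (hE1 i j hij).2).trans (hadj1 i j hij)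
    · exact (hg i (hE2 i j hij).1 j (hE2 i j hij).2).trans (hadj2 i j hij)

end RankCompletable

end SimpleGraph

section GramDimension

variable {V : Type} [Fintype V]

theorem one_le_gd_and_rankCompletable_gd (G : SimpleGraph V) :
    1 ≤ gd G ∧ G.RankCompletable (gd G) :=
  Nat.sInf_mem (s := {k | 1 ≤ k ∧ G.RankCompletable k})
    ⟨max 1 (Fintype.card V), le_max_left _ _, G.rankCompletable_card.mono (le_max_right _ _)⟩

theorem gd_le {G : SimpleGraph V} {k : ℕ} (hk : 1 ≤ k) (h : G.RankCompletable k) : gd G ≤ k :=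
  Nat.sInf_le (s := {k | 1 ≤ k ∧ G.RankCompletable k}) ⟨hk, h⟩

theorem gd_mono {G H : SimpleGraph V} (hGH : G ≤ H) : gd G ≤ gd H :=
  gd_le (one_le_gd_and_rankCompletable_gd H).1 ((one_le_gd_and_rankCompletable_gd H).2.anti hGH)

end GramDimension

theorem gd_cliqueSum {W : Type} [Fintype W] (G G1 G2 : SimpleGraph W) (V1 V2 : Set W)
    (hcover : V1 ∪ V2 = Set.univ)
    (hE1 : ∀ i j, G1.Adj i j → i ∈ V1 ∧ j ∈ V1)
    (hE2 : ∀ i j, G2.Adj i j → i ∈ V2 ∧ j ∈ V2)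
    (hclique1 : G1.IsClique (V1 ∩ V2))
    (hclique2 : G2.IsClique (V1 ∩ V2))
    (hG : G = G1 ⊔ G2) :
    gd G = max (gd G1) (gd G2) := by
  subst hG
  obtain ⟨hpos1, hG1⟩ := one_le_gd_and_rankCompletable_gd G1
  obtain ⟨-, hG2⟩ := one_le_gd_and_rankCompletable_gd G2
  refine le_antisymm (gd_le (hpos1.trans (le_max_left _ _)) ?_)
    (max_le (gd_mono le_sup_left) (gd_mono le_sup_right))
  exact (hG1.mono (le_max_left _ _)).sup_of_isClique_inter (hG2.mono (le_max_right _ _))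
    hcover hE1 hE2 hclique1 hclique2
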